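/- Let k ≥ 4 and s ∈ {4,…,k}. Let F'_2 be the graph with vertex set {u, v, w, u', w₁, w₂} and edges u'w₁, u'w₂, w₁w, w₂w, uu', w₁w₂, u'v. Let F''_2 be obtained from F'_2 by adding vertices y₄,…,y_k adjacent to all vertices of F'_2 except u, and let F_s = F''_2 − u'y_s. Let f assign colors in [k] to u, v, w, y₄,…,y_k with f(y_i) = i for 4 ≤ i ≤ k. Then f extends to a proper k-coloring of F_s if and only if f(v), f(w) ∈ {1,2,3} and (f(u) ≠ s, or f(v) ≠ f(w)). -/

import Mathlib

/-- `c` is a proper `k`-coloring of `G` with colors in `[k] = {1,…,k}`. -/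
def IsProperKColoring {V : Type*} (G : SimpleGraph V) (k : ℕ) (c : V → ℕ) : Prop :=
  (∀ v, c v ∈ Finset.Icc 1 k) ∧ ∀ ⦃x y⦄, G.Adj x y → c x ≠ c y

/-- Index type for the vertices `y₄, …, y_k`. -/
def Yk (k : ℕ) : Type := {i : ℕ // 4 ≤ i ∧ i ≤ k}

/-- Vertices: `u = 0`, `v = 1`, `w = 2`, `u' = 3`, `w₁ = 4`, `w₂ = 5`, plus
`y₄, …, y_k`.  Edges of `F'₂`: `u'w₁, u'w₂, w₁w, w₂w, uu', w₁w₂, u'v`; each `y_j`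
adjacent to all vertices of `F'₂` except `u`, with the edge `u'y_s` removed. -/
def relFs (k s : ℕ) : (Fin 6 ⊕ Yk k) → (Fin 6 ⊕ Yk k) → Prop
  | .inl a, .inl b =>
      (a, b) ∈ ([(3,4),(3,5),(4,2),(5,2),(0,3),(4,5),(3,1)] : List (Fin 6 × Fin 6))
  | .inl a, .inr j => a ≠ 0 ∧ ¬(a = 3 ∧ j.1 = s)
  | _, _ => False

/-- The gadget `F_s = F''₂ − u'y_s`. -/
def Fs (k s : ℕ) : SimpleGraph (Fin 6 ⊕ Yk k) := SimpleGraph.fromRel (relFs k s)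

/-!
Every `y_j` has colour `j ≥ 4`, so `v, w, w₁, w₂`, adjacent to all of them, are coloured from
`{1,2,3}`, and `u'`, which misses only `y_s`, from `{1,2,3,s}`. If `u'` avoids `s`, then
`u'w₁w₂` is a triangle on `{1,2,3}`, so `w` repeats the colour of `u'` and differs from `v`;
if `u'` has colour `s`, then `u` does not. Conversely, colour `u'` by `s` when `f u ≠ s` and
by `f w` otherwise, and `w₁, w₂` by the two colours of `{1,2,3}` other than `f w`.
-/

lemma le_three_or_mem_of_forall_adj {V : Type*} {G : SimpleGraph V} {k : ℕ} {c : V → ℕ}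
    (hc : IsProperKColoring G k c) (y : Yk k → V) (hy : ∀ j, c (y j) = j.1) {x : V}
    {S : Set ℕ} (hx : ∀ j : Yk k, j.1 ∉ S → G.Adj x (y j)) : c x ≤ 3 ∨ c x ∈ S := by
  by_contra! h
  have hck := (Finset.mem_Icc.mp (hc.1 x)).2
  let j : Yk k := ⟨c x, by omega, hck⟩
  exact hc.2 (hx j h.2) (hy j).symm

section Fs

variable {k s : ℕ} {c : Fin 6 ⊕ Yk k → ℕ}

lemma Fs_adj_inl_inl {a b : Fin 6} (hab : a ≠ b)
    (h : (a, b) ∈ ([(3,4),(3,5),(4,2),(5,2),(0,3),(4,5),(3,1)] : List (Fin 6 × Fin 6))) :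
    (Fs k s).Adj (.inl a) (.inl b) :=
  (SimpleGraph.fromRel_adj _ _ _).mpr ⟨by simpa using hab, Or.inl h⟩

lemma Fs_adj_inl_inr {a : Fin 6} {j : Yk k} (ha : a ≠ 0) (h : a = 3 → j.1 ≠ s) :
    (Fs k s).Adj (.inl a) (.inr j) :=
  (SimpleGraph.fromRel_adj _ _ _).mpr ⟨by simp, Or.inl ⟨ha, fun h' => h h'.1 h'.2⟩⟩

/-- In the paper's notation: `v, w, w₁, w₂` get colours `≤ 3`, `u'` a colour `≤ 3` or `s`,
and the seven edges of `F'₂` are properly coloured. -/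
lemma isProperKColoring_Fs_iff (hcy : ∀ j : Yk k, c (.inr j) = j.1) :
    IsProperKColoring (Fs k s) k c ↔
      (∀ a, c (.inl a) ∈ Finset.Icc 1 k) ∧
      (∀ a : Fin 6, a ≠ 0 → a ≠ 3 → c (.inl a) ≤ 3) ∧ (c (.inl 3) ≤ 3 ∨ c (.inl 3) = s) ∧
      c (.inl 0) ≠ c (.inl 3) ∧ c (.inl 1) ≠ c (.inl 3) ∧ c (.inl 2) ≠ c (.inl 4) ∧
      c (.inl 2) ≠ c (.inl 5) ∧ c (.inl 3) ≠ c (.inl 4) ∧ c (.inl 3) ≠ c (.inl 5) ∧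
      c (.inl 4) ≠ c (.inl 5) := by
  constructor
  · intro hc
    refine ⟨fun a => hc.1 _, fun a ha0 ha3 => ?_, ?_, ?_⟩
    · simpa using le_three_or_mem_of_forall_adj hc _ hcy (S := ∅)
        fun j _ => Fs_adj_inl_inr ha0 (absurd · ha3)
    · exact le_three_or_mem_of_forall_adj hc _ hcy (S := {s})
        fun j hj => Fs_adj_inl_inr (by decide) fun _ => hj
    · refine ⟨hc.2 ?_, hc.2 ?_, hc.2 ?_, hc.2 ?_, hc.2 ?_, hc.2 ?_, hc.2 ?_⟩ <;>
        first
        | exact Fs_adj_inl_inl (by decide) (by decide)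
        | exact (Fs_adj_inl_inl (by decide) (by decide)).symm
  · rintro ⟨hrange, hle, hu', h03, h13, h24, h25, h34, h35, h45⟩
    refine ⟨?_, ?_⟩
    · rintro (a | j)
      · exact hrange a
      · rw [hcy, Finset.mem_Icc]
        exact ⟨by have := j.2.1; omega, j.2.2⟩
    have hrel : ∀ x y, relFs k s x y → c x ≠ c y := by
      rintro (a | j) (b | j') h
      · simp only [relFs, List.mem_cons, List.not_mem_nil, or_false, Prod.mk.injEq] at h
        rcases h with ⟨rfl, rfl⟩ | ⟨rfl, rfl⟩ | ⟨rfl, rfl⟩ | ⟨rfl, rfl⟩ | ⟨rfl, rfl⟩ |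
          ⟨rfl, rfl⟩ | ⟨rfl, rfl⟩ <;> simp_all [eq_comm]
      · obtain ⟨ha0, ha3⟩ := h
        rw [hcy]
        have := j'.2.1
        by_cases h3 : a = 3
        · subst h3
          omega
        · have := hle a ha0 h3
          omega
      · exact h.elim
      · exact h.elim
    intro x y hxy
    obtain ⟨-, h | h⟩ := (SimpleGraph.fromRel_adj _ _ _).mp hxy
    · exact hrel _ _ h
    · exact (hrel _ _ h).symm

end Fs

theorem Fs_extension_general (k s : ℕ) (hs : 4 ≤ s ∧ s ≤ k)
    (f : (Fin 6 ⊕ Yk k) → ℕ)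
    (hfu : f (.inl 0) ∈ Finset.Icc 1 k)
    (hfy : ∀ y : Yk k, f (.inr y) = y.1) :
    (∃ c : (Fin 6 ⊕ Yk k) → ℕ, IsProperKColoring (Fs k s) k c ∧
        c (.inl 0) = f (.inl 0) ∧ c (.inl 1) = f (.inl 1) ∧ c (.inl 2) = f (.inl 2) ∧
        ∀ y : Yk k, c (.inr y) = f (.inr y)) ↔
      (f (.inl 1) ∈ ({1,2,3} : Set ℕ) ∧ f (.inl 2) ∈ ({1,2,3} : Set ℕ) ∧
        (f (.inl 0) ≠ s ∨ f (.inl 1) ≠ f (.inl 2))) := by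
  simp only [Finset.mem_Icc] at hfu
  simp only [Set.mem_insert_iff, Set.mem_singleton_iff]
  constructor
  · rintro ⟨c, hc, hu, hv, hw, hy⟩
    obtain ⟨hrange, hle, hu', h03, h13, h24, h25, h34, h35, h45⟩ :=
      (isProperKColoring_Fs_iff fun j => (hy j).trans (hfy j)).mp hc
    rw [← hu, ← hv, ← hw]
    have hpos a : 1 ≤ c (.inl a) := (Finset.mem_Icc.mp (hrange a)).1
    have := hle 1 (by decide) (by decide); have := hle 2 (by decide) (by decide)
    have := hle 4 (by decide) (by decide); have := hle 5 (by decide) (by decide)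
    have := hpos 1; have := hpos 2; have := hpos 3; have := hpos 4; have := hpos 5
    omega
  · rintro ⟨hv, hw, hsv⟩
    refine ⟨Sum.elim ![f (.inl 0), f (.inl 1), f (.inl 2),
      if f (.inl 0) = s then f (.inl 2) else s,
      if f (.inl 2) = 1 then 2 else 1, if f (.inl 2) = 3 then 2 else 3] (fun j : Yk k => j.1),
      (isProperKColoring_Fs_iff fun _ => rfl).mpr ⟨fun a => ?_, fun a ha0 ha3 => ?_, ?_⟩,
      rfl, rfl, rfl, fun y => (hfy y).symm⟩
    · fin_cases a <;>
        simp only [Finset.mem_Icc, Fin.isValue, Fin.zero_eta, Fin.mk_one, Fin.reduceFinMk,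
          Sum.elim_inl, Matrix.cons_val_zero, Matrix.cons_val_one, Matrix.cons_val] <;>
        (try split_ifs) <;> omega
    · fin_cases a <;>
        simp_all only [ne_eq, not_true_eq_false, Fin.isValue, Fin.zero_eta, Fin.mk_one,
          Fin.reduceFinMk, Sum.elim_inl, Matrix.cons_val_zero, Matrix.cons_val_one,
          Matrix.cons_val] <;>
        (try split_ifs) <;> omega
    · simp only [ne_eq, Fin.isValue, Sum.elim_inl, Matrix.cons_val_zero, Matrix.cons_val_one,
        Matrix.cons_val]
      split_ifs <;> omega

/-- A function `f` on `{u, v, w, y₄, …, y_k}` with `f(yᵢ) = i` extends to a proper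
`k`-coloring of `F_s` iff `f v, f w ∈ {1,2,3}` and (`f u ≠ s` or `f v ≠ f w`). -/
theorem Fs_extension (k s : ℕ) (hk : 4 ≤ k) (hs : 4 ≤ s ∧ s ≤ k)
    (f : (Fin 6 ⊕ Yk k) → ℕ)
    (hfu : f (.inl 0) ∈ Finset.Icc 1 k) (hfv : f (.inl 1) ∈ Finset.Icc 1 k)
    (hfw : f (.inl 2) ∈ Finset.Icc 1 k)
    (hfy : ∀ y : Yk k, f (.inr y) = y.1) :
    (∃ c : (Fin 6 ⊕ Yk k) → ℕ, IsProperKColoring (Fs k s) k c ∧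
        c (.inl 0) = f (.inl 0) ∧ c (.inl 1) = f (.inl 1) ∧ c (.inl 2) = f (.inl 2) ∧
        ∀ y : Yk k, c (.inr y) = f (.inr y)) ↔
      (f (.inl 1) ∈ ({1,2,3} : Set ℕ) ∧ f (.inl 2) ∈ ({1,2,3} : Set ℕ) ∧
        (f (.inl 0) ≠ s ∨ f (.inl 1) ≠ f (.inl 2))) :=
  Fs_extension_general k s hs f hfu hfy
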